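/- Every matrix M ∈ SL_3(𝔽_7) whose characteristic polynomial is X^3 − 4X^2 + 3X − 1 has order 19 as a group element. -/
import Mathlib


open Matrix Polynomial

abbrev SL3 := Matrix.SpecialLinearGroup (Fin 3) (ZMod 7)

theorem order_of_charpoly_43 (M : SL3)
    (h : M.val.charpoly =
      X ^ 3 - C (4 : ZMod 7) * X ^ 2 + C (3 : ZMod 7) * X - 1) :
    orderOf M = 19 := by
  have hC := Matrix.aeval_self_charpoly M.val
  rw [h] at hC
  have h4 : C (4 : ZMod 7) = (4 : (ZMod 7)[X]) := map_ofNat C 4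
  have h3 : C (3 : ZMod 7) = (3 : (ZMod 7)[X]) := map_ofNat C 3
  rw [h4, h3] at hC
  have h7 : (7 : (ZMod 7)[X]) = 0 := by
    rw [show (7 : (ZMod 7)[X]) = C 7 from (map_ofNat C 7).symm,
      show (7 : ZMod 7) = 0 from rfl, map_zero]
  have key : (X : (ZMod 7)[X]) ^ 19 - 1 =
      (X ^ 3 - 4 * X ^ 2 + 3 * X - 1) *
      (X ^ 16 + 4 * X ^ 15 + 6 * X ^ 14 + 6 * X ^ 13 + 3 * X ^ 12 + 4 * X ^ 10
        + 5 * X ^ 9 + X ^ 8 + 2 * X ^ 6 + 2 * X ^ 5 + 2 * X ^ 4 + 4 * X ^ 3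
        + 5 * X ^ 2 + 3 * X + 1) := by
    linear_combination (X ^ 17 + X ^ 16 + X ^ 15 - X ^ 13 + 2 * X ^ 12 + X ^ 11
      - X ^ 10 + X ^ 8 + X ^ 5 + X ^ 4 : (ZMod 7)[X]) * h7
  have h19 : M.val ^ 19 = 1 := by
    have h2 := congrArg (aeval M.val) key
    simp only [map_sub, map_add, _root_.map_mul, map_pow, _root_.map_one,
      map_ofNat, aeval_X, aeval_one] at h2 hC
    rw [hC, zero_mul] at h2
    exact sub_eq_zero.mp h2
  have hM19 : M ^ 19 = 1 := Subtype.ext h19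
  have hne : M ≠ 1 := by
    intro hM1
    rw [hM1] at hC
    simp only [Matrix.SpecialLinearGroup.coe_one, map_sub, map_add,
      _root_.map_mul, map_pow, _root_.map_one, map_ofNat, aeval_X,
      one_pow, mul_one] at hC
    norm_num at hC
    exact absurd hC (by decide)
  have hd : orderOf M ∣ 19 := orderOf_dvd_of_pow_eq_one hM19
  have hp : Nat.Prime 19 := by norm_num
  rcases hp.eq_one_or_self_of_dvd _ hd with h1 | h1
  · exact absurd (orderOf_eq_one_iff.mp h1) hne
  · exact h1
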